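/- Let λ be a nonzero real number and define r(y) = y − (λ²/2)·y³ + (λ²/2)·y⁵ (the exact reduced map on the approximate center manifold of the fixed point A = (0,0) for γ = 0). Then 0 is an asymptotically stable fixed point of r in the discrete-dynamics sense: there exists δ > 0 such that for every y₀ with |y₀| < δ, the sequence of iterates rⁿ(y₀) tends to 0 as n → ∞, and moreover |r(y)| ≤ |y| for all |y| < δ. -/

import Mathlib

/-!
The map `r` is odd, so `|r y| = |r |y||` and the absolute values of an orbit are the orbit of
`t ↦ |r t|` on `[0, ∞)`. Writing `r y = y * (1 - (λ²/2) y² (1 - y²))`, this map satisfies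
`0 ≤ |r t| < t` for small `t > 0`. Hence the absolute values along the orbit decrease to a limit,
which is a fixed point of `t ↦ |r t|` by continuity, and so must be `0`.
-/

open Filter Set Topology

/-- The exact reduced map on the approximate center manifold of A = (0,0) for γ = 0. -/
noncomputable def r (lam y : ℝ) : ℝ := y - (lam^2/2)*y^3 + (lam^2/2)*y^5

theorem tendsto_iterate_of_forall_le_self {f : ℝ → ℝ} {a b t : ℝ} (hf : Continuous f)
    (hlow : ∀ s ∈ Ico a b, a ≤ f s) (hle : ∀ s ∈ Ico a b, f s ≤ s)
    (hfix : ∀ s ∈ Ico a b, f s = s → s = a) (ht : t ∈ Ico a b) :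
    Tendsto (fun n => f^[n] t) atTop (𝓝 a) := by
  have hmem : ∀ n, f^[n] t ∈ Ico a b := by
    intro n
    induction n with
    | zero => exact ht
    | succ n ih =>
      rw [Function.iterate_succ_apply']
      exact ⟨hlow _ ih, (hle _ ih).trans_lt ih.2⟩
  have hanti : Antitone fun n => f^[n] t := antitone_nat_of_succ_le fun n => by
    rw [Function.iterate_succ_apply']
    exact hle _ (hmem n)
  have hbdd : BddBelow (range fun n => f^[n] t) := ⟨a, by rintro _ ⟨n, rfl⟩; exact (hmem n).1⟩
  have hlim := tendsto_atTop_ciInf hanti hbdd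
  have hL : ⨅ n, f^[n] t ∈ Ico a b :=
    ⟨le_ciInf fun n => (hmem n).1, (ciInf_le hbdd 0).trans_lt (hmem 0).2⟩
  rwa [hfix _ hL (isFixedPt_of_tendsto_iterate hlim hf.continuousAt)] at hlim

lemma r_neg (lam y : ℝ) : r lam (-y) = -r lam y := by
  unfold r; ring

lemma semiconj_abs_r (lam : ℝ) : Function.Semiconj abs (r lam) fun t => |r lam t| := by
  intro y
  rcases abs_choice y with hy | hy <;> simp only [hy, r_neg, abs_neg]

lemma r_eq_mul (lam y : ℝ) : r lam y = y * (1 - lam ^ 2 / 2 * y ^ 2 * (1 - y ^ 2)) := by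
  unfold r; ring

lemma abs_r_eq_mul {lam y : ℝ} (hly : lam ^ 2 * y ^ 2 ≤ 2) :
    |r lam y| = |y| * (1 - lam ^ 2 / 2 * y ^ 2 * (1 - y ^ 2)) := by
  have hfactor : 0 ≤ 1 - lam ^ 2 / 2 * y ^ 2 * (1 - y ^ 2) := by
    nlinarith [mul_nonneg (mul_nonneg (sq_nonneg lam) (sq_nonneg y)) (sq_nonneg y)]
  rw [r_eq_mul, abs_mul, abs_of_nonneg hfactor]

lemma abs_r_le {lam y : ℝ} (hy : y ^ 2 ≤ 1) (hly : lam ^ 2 * y ^ 2 ≤ 2) : |r lam y| ≤ |y| := by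
  rw [abs_r_eq_mul hly]
  have : 0 ≤ lam ^ 2 / 2 * y ^ 2 * (1 - y ^ 2) := by
    have := sub_nonneg.2 hy; positivity
  nlinarith [abs_nonneg y]

lemma abs_r_lt {lam y : ℝ} (hlam : lam ≠ 0) (hy0 : y ≠ 0) (hy : y ^ 2 < 1)
    (hly : lam ^ 2 * y ^ 2 ≤ 2) : |r lam y| < |y| := by
  rw [abs_r_eq_mul hly]
  have : 0 < lam ^ 2 / 2 * y ^ 2 * (1 - y ^ 2) := by
    have := sub_pos.2 hy; positivity
  nlinarith [abs_pos.2 hy0]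

lemma sq_lt_one_of_abs_lt_inv {lam y : ℝ} (hy : |y| < (1 + |lam|)⁻¹) :
    y ^ 2 < 1 ∧ lam ^ 2 * y ^ 2 < 1 := by
  have hmul : |y| * (1 + |lam|) < 1 :=
    calc |y| * (1 + |lam|) < (1 + |lam|)⁻¹ * (1 + |lam|) := by gcongr
      _ = 1 := inv_mul_cancel₀ (by positivity)
  have hy0 := abs_nonneg y
  have hl0 := abs_nonneg lam
  constructor
  · rw [← sq_abs]; nlinarith
  · rw [← sq_abs lam, ← sq_abs y, ← mul_pow]; nlinarith [mul_nonneg hl0 hy0]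

theorem stmt_13 (lam : ℝ) (h : lam ≠ 0) :
    ∃ δ > 0, (∀ y : ℝ, |y| < δ → |r lam y| ≤ |y|) ∧
      ∀ y₀ : ℝ, |y₀| < δ →
        Filter.Tendsto (fun n => (r lam)^[n] y₀) Filter.atTop (nhds 0) := by
  set δ := (1 + |lam|)⁻¹
  refine ⟨δ, by positivity, fun y hy => ?_, fun y₀ hy₀ => ?_⟩
  · obtain ⟨hy1, hly⟩ := sq_lt_one_of_abs_lt_inv hy
    exact abs_r_le hy1.le (by linarith)
  have hsmall (s : ℝ) (hs : s ∈ Ico 0 δ) : s ^ 2 < 1 ∧ lam ^ 2 * s ^ 2 < 1 :=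
    sq_lt_one_of_abs_lt_inv (by rw [abs_of_nonneg hs.1]; exact hs.2)
  have hcont : Continuous fun t => |r lam t| := by unfold r; fun_prop
  rw [tendsto_zero_iff_abs_tendsto_zero]
  simp_rw [Function.comp_def, (semiconj_abs_r lam).iterate_right _ _]
  refine tendsto_iterate_of_forall_le_self hcont (fun _ _ => abs_nonneg _) (fun s hs => ?_)
    (fun s hs hfix => ?_) ⟨abs_nonneg y₀, hy₀⟩
  · obtain ⟨hs1, hls⟩ := hsmall s hs
    exact (abs_r_le hs1.le (by linarith)).trans_eq (abs_of_nonneg hs.1)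
  · obtain ⟨hs1, hls⟩ := hsmall s hs
    by_contra hs0
    exact (abs_r_lt h hs0 hs1 (by linarith)).ne (hfix.trans (abs_of_nonneg hs.1).symm)
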